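/- arXiv:1806.09292 — 8 statements merged into one kernel-verified Lean document; each statement's English description precedes it below -/
import Mathlib

section
/- For every t in the interval [0, 1/2], the inequality 3/2 ≤ h(t) + 2t·h'(t) holds, where h(s) = 2/√(1−s) − 1/(1−s+√(1−s)); moreover the function s ↦ h(s) + 2s·h'(s) is monotonically increasing on [0, 1/2]. -/
open Real Set

/-!
In the variable `r = √(1 - s)`, which decreases in `s`, the function `h s + 2 s h'(s)` becomes
`1/(1+r)² + 2/(r²(1+r)) + 1/(r³(1+r)²)`, a sum of terms decreasing in `r > 0`. Hence it is
increasing in `s`, and the lower bound is its value `3/2` at `s = 0`.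
-/

noncomputable def combinedForm (r : ℝ) : ℝ :=
  1 / (1 + r) ^ 2 + 2 / (r ^ 2 * (1 + r)) + 1 / (r ^ 3 * (1 + r) ^ 2)

lemma antitoneOn_combinedForm : AntitoneOn combinedForm (Ioi 0) := by
  intro r₁ hr₁ r₂ _ hle
  have : 0 < r₁ := hr₁
  have : 0 < r₂ := this.trans_le hle
  unfold combinedForm
  gcongr

lemma hasDerivAt_two_div_sqrt_sub_one_div {t : ℝ} (ht : t < 1) :
    HasDerivAt (fun s => 2 / √(1 - s) - 1 / (1 - s + √(1 - s)))
      (1 / √(1 - t) ^ 3 - (1 + 1 / (2 * √(1 - t))) / (1 - t + √(1 - t)) ^ 2) t := by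
  have hpos : 0 < 1 - t := by linarith
  have hr : 0 < √(1 - t) := sqrt_pos.2 hpos
  have hsub : HasDerivAt (fun s : ℝ => 1 - s) (-1) t := by
    simpa using (hasDerivAt_id t).const_sub 1
  have hsqrt : HasDerivAt (fun s => √(1 - s)) (-1 / (2 * √(1 - t))) t :=
    ((hasDerivAt_sqrt hpos.ne').comp t hsub).congr_deriv (by ring)
  have hden : 0 < 1 - t + √(1 - t) := by positivity
  refine (((hasDerivAt_const t (2 : ℝ)).div hsqrt hr.ne').sub
    ((hasDerivAt_const t (1 : ℝ)).div (hsub.add hsqrt) hden.ne')).congr_deriv ?_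
  simp only [Pi.add_apply]
  field_simp
  ring

lemma eq_combinedForm_of_sq_eq_one_sub {r t : ℝ} (hr : 0 < r) (hrt : r ^ 2 = 1 - t) :
    2 / r - 1 / (1 - t + r) + 2 * t * (1 / r ^ 3 - (1 + 1 / (2 * r)) / (1 - t + r) ^ 2) =
      combinedForm r := by
  obtain rfl : t = 1 - r ^ 2 := by linarith
  rw [show 1 - (1 - r ^ 2) + r = r * (1 + r) by ring]
  unfold combinedForm
  field_simp
  ring

lemma add_two_mul_deriv_eq_combinedForm {h : ℝ → ℝ}
    (hh : ∀ s : ℝ, h s = 2 / √(1 - s) - 1 / (1 - s + √(1 - s))) {t : ℝ} (ht : t < 1) :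
    h t + 2 * t * deriv h t = combinedForm √(1 - t) := by
  rw [funext hh, (hasDerivAt_two_div_sqrt_sub_one_div ht).deriv]
  exact eq_combinedForm_of_sq_eq_one_sub (sqrt_pos.2 (sub_pos.2 ht)) (sq_sqrt (sub_pos.2 ht).le)

lemma monotoneOn_add_two_mul_deriv {h : ℝ → ℝ}
    (hh : ∀ s : ℝ, h s = 2 / √(1 - s) - 1 / (1 - s + √(1 - s))) :
    MonotoneOn (fun s => h s + 2 * s * deriv h s) (Iio 1) := by
  intro s₁ hs₁ s₂ hs₂ hle
  simp only
  rw [add_two_mul_deriv_eq_combinedForm hh hs₁, add_two_mul_deriv_eq_combinedForm hh hs₂]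
  exact antitoneOn_combinedForm (sqrt_pos.2 (sub_pos.2 hs₂)) (sqrt_pos.2 (sub_pos.2 hs₁))
    (sqrt_le_sqrt (by linarith))

theorem h_plus_two_t_h_deriv_bound (h : ℝ → ℝ)
    (hh : ∀ s : ℝ, h s = 2 / Real.sqrt (1 - s) - 1 / (1 - s + Real.sqrt (1 - s))) :
    (∀ t ∈ Set.Icc (0 : ℝ) (1 / 2), (3 : ℝ) / 2 ≤ h t + 2 * t * deriv h t) ∧
    MonotoneOn (fun s => h s + 2 * s * deriv h s) (Set.Icc (0 : ℝ) (1 / 2)) := by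
  have hmono := (monotoneOn_add_two_mul_deriv hh).mono
    (fun t ht => lt_of_le_of_lt ht.2 (by norm_num) : Icc (0 : ℝ) (1 / 2) ⊆ Iio 1)
  refine ⟨fun t ht => ?_, hmono⟩
  have h0 : h 0 + 2 * 0 * deriv h 0 = 3 / 2 := by norm_num [hh]
  rw [← h0]
  exact hmono (left_mem_Icc.2 (by norm_num)) ht ht.1
end

section
/- For all real η > 0, one has 0 ≤ −∫_{√η}^{∞} sin(η − t²) dt ≤ 1/√η, where the improper integral is understood as an (conditionally convergent) improper Riemann integral. -/
/-!
Integrating by parts with `d/dt [cos (η - t²) / (2t)] = sin (η - t²) - cos (η - t²) / (2t²)`,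
the integral `∫_{√η}^R sin (η - t²) dt` equals
`cos (η - R²) / (2R) - 1 / (2√η) + ∫_{√η}^R cos (η - t²) / (2t²) dt`.
The boundary term at `R` tends to `0` and the remainder converges absolutely, with modulus at most
`∫_{√η}^∞ dt / (2t²) = 1 / (2√η)`. Hence the improper integral lies in `[-1/√η, 0]`.
-/

open Real Filter MeasureTheory Set Topology

section SinSubSq

variable (c : ℝ) {a : ℝ}

lemma hasDerivAt_cos_sub_sq_div_two_mul {t : ℝ} (ht : t ≠ 0) :
    HasDerivAt (fun t => cos (c - t ^ 2) / (2 * t))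
      (sin (c - t ^ 2) - cos (c - t ^ 2) / (2 * t ^ 2)) t := by
  have hcos : HasDerivAt (fun t => cos (c - t ^ 2)) (sin (c - t ^ 2) * (2 * t)) t := by
    simpa using ((hasDerivAt_pow 2 t).const_sub c).cos
  have hlin : HasDerivAt (fun t : ℝ => 2 * t) 2 t := by
    simpa using (hasDerivAt_id t).const_mul (2 : ℝ)
  refine (hcos.div hlin (mul_ne_zero two_ne_zero ht)).congr_deriv ?_
  field_simp

lemma tendsto_cos_sub_sq_div_two_mul_atTop :
    Tendsto (fun R => cos (c - R ^ 2) / (2 * R)) atTop (𝓝 0) := by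
  have hinv : Tendsto (fun R : ℝ => (2 * R)⁻¹) atTop (𝓝 0) :=
    (tendsto_id.const_mul_atTop two_pos).inv_tendsto_atTop
  simpa only [div_eq_mul_inv] using
    bdd_le_mul_tendsto_zero' 1 (.of_forall fun R => abs_cos_le_one (c - R ^ 2)) hinv

lemma norm_cos_sub_sq_div_le {t : ℝ} (ht : 0 < t) :
    ‖cos (c - t ^ 2) / (2 * t ^ 2)‖ ≤ t ^ (-2 : ℝ) / 2 := by
  rw [Real.norm_eq_abs, abs_div, abs_of_pos (by positivity : (0 : ℝ) < 2 * t ^ 2),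
    rpow_neg ht.le, rpow_two]
  calc |cos (c - t ^ 2)| / (2 * t ^ 2) ≤ 1 / (2 * t ^ 2) := by gcongr; exact abs_cos_le_one _
    _ = (t ^ 2)⁻¹ / 2 := by field_simp

lemma integrableOn_Ioi_cos_sub_sq_div (ha : 0 < a) :
    IntegrableOn (fun t => cos (c - t ^ 2) / (2 * t ^ 2)) (Ioi a) := by
  refine Integrable.mono'
    ((integrableOn_Ioi_rpow_of_lt (by norm_num : (-2 : ℝ) < -1) ha).div_const 2)
    (Measurable.aestronglyMeasurable (by fun_prop)) ?_
  filter_upwards [ae_restrict_mem measurableSet_Ioi] with t ht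
  exact norm_cos_sub_sq_div_le c (ha.trans ht)

lemma abs_integral_Ioi_cos_sub_sq_div_le (ha : 0 < a) :
    |∫ t in Ioi a, cos (c - t ^ 2) / (2 * t ^ 2)| ≤ 1 / (2 * a) := by
  have hmajorant : ∫ t in Ioi a, t ^ (-2 : ℝ) / 2 = 1 / (2 * a) := by
    rw [integral_div, integral_Ioi_rpow_of_lt (by norm_num) ha]
    norm_num [rpow_neg_one]
    ring
  rw [← hmajorant, ← Real.norm_eq_abs]
  refine norm_integral_le_of_norm_le
    ((integrableOn_Ioi_rpow_of_lt (by norm_num) ha).div_const 2) ?_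
  filter_upwards [ae_restrict_mem measurableSet_Ioi] with t ht
  exact norm_cos_sub_sq_div_le c (ha.trans ht)

lemma integral_sin_sub_sq_eq (ha : 0 < a) {R : ℝ} (hR : a ≤ R) :
    ∫ t in a..R, sin (c - t ^ 2) =
      cos (c - R ^ 2) / (2 * R) - cos (c - a ^ 2) / (2 * a) +
        ∫ t in a..R, cos (c - t ^ 2) / (2 * t ^ 2) := by
  have hpos : ∀ t ∈ uIcc a R, 0 < t := fun t ht => ha.trans_le (uIcc_of_le hR ▸ ht).1
  have hrem : IntervalIntegrable (fun t => cos (c - t ^ 2) / (2 * t ^ 2)) volume a R :=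
    ContinuousOn.intervalIntegrable <| ContinuousOn.div (by fun_prop) (by fun_prop)
      fun t ht => by have := hpos t ht; positivity
  have hsin : IntervalIntegrable (fun t => sin (c - t ^ 2)) volume a R := by
    apply Continuous.intervalIntegrable; fun_prop
  have hftc := intervalIntegral.integral_eq_sub_of_hasDerivAt
    (fun t ht => hasDerivAt_cos_sub_sq_div_two_mul c (hpos t ht).ne') (hsin.sub hrem)
  rw [intervalIntegral.integral_sub hsin hrem] at hftc
  linarith

theorem tendsto_integral_sin_sub_sq (ha : 0 < a) :
    Tendsto (fun R => ∫ t in a..R, sin (c - t ^ 2)) atTop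
      (𝓝 ((∫ t in Ioi a, cos (c - t ^ 2) / (2 * t ^ 2)) - cos (c - a ^ 2) / (2 * a))) := by
  have hlim := ((tendsto_cos_sub_sq_div_two_mul_atTop c).sub_const
    (cos (c - a ^ 2) / (2 * a))).add
    (intervalIntegral_tendsto_integral_Ioi a (integrableOn_Ioi_cos_sub_sq_div c ha) tendsto_id)
  rw [zero_sub, neg_add_eq_sub] at hlim
  refine hlim.congr' ?_
  filter_upwards [eventually_ge_atTop a] with R hR
  exact (integral_sin_sub_sq_eq c ha hR).symm

end SinSubSq

theorem improper_sin_tail_bound (η : ℝ) (hη : 0 < η) :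
    ∃ I : ℝ,
      Filter.Tendsto (fun R : ℝ => ∫ t in Real.sqrt η..R, Real.sin (η - t ^ 2))
        Filter.atTop (nhds I) ∧
      0 ≤ -I ∧ -I ≤ 1 / Real.sqrt η := by
  have ha : 0 < √η := sqrt_pos.mpr hη
  refine ⟨_, tendsto_integral_sin_sub_sq η ha, ?_⟩
  obtain ⟨hlo, hhi⟩ := abs_le.mp (abs_integral_Ioi_cos_sub_sq_div_le η ha)
  have hhalf : 1 / √η = 1 / (2 * √η) + 1 / (2 * √η) := by field_simp; ring
  rw [sq_sqrt hη.le, sub_self, cos_zero, hhalf]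
  constructor <;> linarith
end

section
/- For all real z > 0, the function z ↦ coth(z)/z − 1/z² is nonnegative, monotonically decreasing, and bounded above by its limit 1/3 as z → 0⁺; in particular 0 ≤ coth(z)/z − 1/z² ≤ 1/3 for all z > 0. -/
/-!
Substituting `x = i z / π` into the Mittag-Leffler expansion of `π cot (π x)` gives
`coth z / z - 1 / z ^ 2 = ∑ₙ 2 / (z ^ 2 + π ^ 2 (n + 1) ^ 2)`. Every term is positive,
decreasing in `z > 0` and bounded by its value `2 / (π ^ 2 (n + 1) ^ 2)` at `z = 0`, and these
values sum to `2 ζ(2) / π ^ 2 = 1 / 3`; by the same bound the series is continuous in `z`,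
which gives the limit.
-/

open Real Filter Topology

noncomputable def cothTerm (z : ℝ) (n : ℕ) : ℝ := 2 / (z ^ 2 + (π * (n + 1)) ^ 2)

theorem hasSum_cothTerm {z : ℝ} (hz : z ≠ 0) :
    HasSum (cothTerm z) (cosh z / sinh z / z - 1 / z ^ 2) := by
  set x : ℂ := z * Complex.I / π with hx_def
  have hz' : (z : ℂ) ≠ 0 := Complex.ofReal_ne_zero.mpr hz
  have hx : x ∈ Complex.integerComplement := by
    rintro ⟨n, hn⟩
    have him := congrArg Complex.im hn
    simp only [hx_def, Complex.intCast_im, Complex.div_ofReal_im, Complex.mul_im,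
      Complex.ofReal_re, Complex.I_im, Complex.ofReal_im, Complex.I_re] at him
    exact div_ne_zero hz pi_ne_zero (by simpa using him.symm)
  have hterm (n : ℕ) : (cothTerm z n : ℂ) = Complex.I / (π * z) * cotTerm x n := by
    have hprod : (x + (n + 1)) * (x - (n + 1)) = -((z ^ 2 + (π * (n + 1)) ^ 2) / π ^ 2) := by
      rw [hx_def]; field_simp; ring_nf; rw [Complex.I_sq]; ring
    rw [cothTerm, cotTerm_identity hx, hprod, hx_def]
    push_cast
    field_simp
    ring_nf
    rw [Complex.I_sq]
    ring
  have hval : Complex.I / (π * z) * (π * Complex.cot (π * x) - 1 / x) =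
      ((cosh z / sinh z / z - 1 / z ^ 2 : ℝ) : ℂ) := by
    have hs : Complex.sinh z ≠ 0 := by
      rw [← Complex.ofReal_sinh]; exact Complex.ofReal_ne_zero.mpr (sinh_ne_zero.mpr hz)
    have hπx : (π : ℂ) * x = z * Complex.I := by rw [hx_def]; field_simp
    rw [hπx, Complex.cot_eq_cos_div_sin, Complex.cos_mul_I, Complex.sin_mul_I, hx_def]
    push_cast
    field_simp
  have hsum := (summable_cotTerm hx).hasSum.mul_left (Complex.I / (π * z))
  rw [← cot_series_rep' hx, hval] at hsum
  exact Complex.hasSum_ofReal.mp (hsum.congr_fun hterm)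

theorem cothTerm_nonneg (z : ℝ) (n : ℕ) : 0 ≤ cothTerm z n := by
  unfold cothTerm; positivity

theorem cothTerm_zero (n : ℕ) : cothTerm 0 n = 2 / (π * (n + 1)) ^ 2 := by
  rw [cothTerm, zero_pow two_ne_zero, zero_add]

theorem cothTerm_le_cothTerm_zero (z : ℝ) (n : ℕ) : cothTerm z n ≤ cothTerm 0 n := by
  rw [cothTerm_zero, cothTerm]
  exact div_le_div_of_nonneg_left zero_le_two (by positivity) (le_add_of_nonneg_left (sq_nonneg z))

theorem cothTerm_antitoneOn (n : ℕ) : AntitoneOn (cothTerm · n) (Set.Ici 0) := by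
  intro a ha b _ hab
  have : 0 ≤ a := ha
  simp only [cothTerm]; gcongr

theorem continuous_cothTerm (n : ℕ) : Continuous (cothTerm · n) := by
  unfold cothTerm
  exact continuous_const.div (by fun_prop) fun z => by positivity

theorem hasSum_cothTerm_zero : HasSum (cothTerm 0) (1 / 3) := by
  have h := ((hasSum_nat_add_iff' 1).mpr hasSum_zeta_two).mul_left (2 / π ^ 2)
  rw [Finset.sum_range_one, Nat.cast_zero, zero_pow two_ne_zero, div_zero, sub_zero,
    show 2 / π ^ 2 * (π ^ 2 / 6) = 1 / 3 by field_simp; norm_num] at h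
  refine h.congr_fun fun n => ?_
  rw [cothTerm_zero]
  push_cast
  field_simp

theorem continuous_tsum_cothTerm : Continuous fun z => ∑' n, cothTerm z n :=
  continuous_tsum continuous_cothTerm hasSum_cothTerm_zero.summable fun n z => by
    rw [norm_of_nonneg (cothTerm_nonneg z n)]; exact cothTerm_le_cothTerm_zero z n

theorem coth_over_z_minus_inv_sq (f : ℝ → ℝ)
    (hf : ∀ z : ℝ, f z = Real.cosh z / Real.sinh z / z - 1 / z ^ 2) :
    AntitoneOn f (Set.Ioi (0 : ℝ)) ∧
    Filter.Tendsto f (nhdsWithin 0 (Set.Ioi (0 : ℝ))) (nhds (1 / 3)) ∧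
    ∀ z : ℝ, 0 < z → 0 ≤ f z ∧ f z ≤ 1 / 3 := by
  have hsum (z : ℝ) (hz : 0 < z) : HasSum (cothTerm z) (f z) := hf z ▸ hasSum_cothTerm hz.ne'
  refine ⟨?_, ?_, fun z hz => ⟨?_, ?_⟩⟩
  · intro a ha b hb hab
    exact hasSum_le (fun n => cothTerm_antitoneOn n (Set.Ioi_subset_Ici_self ha)
      (Set.Ioi_subset_Ici_self hb) hab) (hsum b hb) (hsum a ha)
  · have hlim := (continuous_tsum_cothTerm.tendsto 0).mono_left
      (nhdsWithin_le_nhds (s := Set.Ioi 0))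
    rw [hasSum_cothTerm_zero.tsum_eq] at hlim
    refine hlim.congr' ?_
    filter_upwards [self_mem_nhdsWithin] with z hz using (hsum z hz).tsum_eq
  · exact (hsum z hz).nonneg (cothTerm_nonneg z)
  · exact hasSum_le (cothTerm_le_cothTerm_zero z) (hsum z hz) hasSum_cothTerm_zero
end

section
/- Let f : [−1/2, 1/2] → ℝ be an integrable function with Fourier cosine coefficients a₀ = ∫_{−1/2}^{1/2} f(τ) dτ and a_p = ∫_{−1/2}^{1/2} f(τ) cos(2πpτ) dτ for p ≥ 1. Then the supremum of f over [−1/2, 1/2] is at least a₀ + (1/2)·sup_{p≥1} |a_p|, and the infimum of f over [−1/2, 1/2] is at most a₀ − (1/2)·sup_{p≥1} |a_p|. -/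
/-!
Testing `f` against the nonnegative weight `1 ± cos (2πpτ)`, whose integral over the unit-length
interval is `1`, gives a weighted average `a₀ ± a_p` of `f`, which lies between `inf f` and `sup f`.
Hence `inf f ≤ a₀ - |a_p|` and `a₀ + |a_p| ≤ sup f` for every `p ≥ 1`; the factor `1/2` is then
absorbed because `sup_p |a_p| ≥ 0`.
-/

open Real Set intervalIntegral
open MeasureTheory (volume)

section WeightedAverage

variable {f w : ℝ → ℝ} {a b c : ℝ}

lemma integral_mul_le_mul_integral_of_le (hab : a ≤ b)
    (hf : IntervalIntegrable f volume a b) (hw : ContinuousOn w (uIcc a b))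
    (hw0 : ∀ x ∈ Icc a b, 0 ≤ w x)
    (hfc : ∀ x ∈ Icc a b, f x ≤ c) :
    ∫ x in a..b, f x * w x ≤ c * ∫ x in a..b, w x := by
  rw [← integral_const_mul]
  exact integral_mono_on hab (hf.mul_continuousOn hw)
    (hw.intervalIntegrable.const_mul c)
    fun x hx => mul_le_mul_of_nonneg_right (hfc x hx) (hw0 x hx)

lemma mul_integral_le_integral_mul_of_le (hab : a ≤ b)
    (hf : IntervalIntegrable f volume a b) (hw : ContinuousOn w (uIcc a b))
    (hw0 : ∀ x ∈ Icc a b, 0 ≤ w x)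
    (hcf : ∀ x ∈ Icc a b, c ≤ f x) :
    c * ∫ x in a..b, w x ≤ ∫ x in a..b, f x * w x := by
  rw [← integral_const_mul]
  exact integral_mono_on hab (hw.intervalIntegrable.const_mul c)
    (hf.mul_continuousOn hw)
    fun x hx => mul_le_mul_of_nonneg_right (hcf x hx) (hw0 x hx)

end WeightedAverage

lemma integral_cos_two_pi_nat_mul_eq_zero {p : ℕ} (hp : p ≠ 0) :
    ∫ τ in (-(1 / 2) : ℝ)..(1 / 2), cos (2 * π * p * τ) = 0 := by
  have hc : 2 * π * p ≠ 0 := by positivity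
  rw [integral_comp_mul_left (fun x => cos x) hc, integral_cos,
    show 2 * π * p * (1 / 2) = p * π by ring, show 2 * π * p * (-(1 / 2)) = -(p * π) by ring,
    sin_neg, sin_nat_mul_pi]
  simp

section CosineWeight

variable {f : ℝ → ℝ} {ε : ℝ} {p : ℕ}

lemma one_add_mul_cos_nonneg (hε : |ε| ≤ 1) (x : ℝ) : 0 ≤ 1 + ε * cos x := by
  have : |ε * cos x| ≤ 1 := by
    rw [abs_mul]
    exact mul_le_one₀ hε (abs_nonneg _) (abs_cos_le_one x)
  linarith [neg_abs_le (ε * cos x)]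

lemma integral_one_add_mul_cos_two_pi_nat_mul (hp : p ≠ 0) :
    ∫ τ in (-(1 / 2) : ℝ)..(1 / 2), (1 + ε * cos (2 * π * p * τ)) = 1 := by
  rw [integral_add intervalIntegrable_const (Continuous.intervalIntegrable (by fun_prop) _ _),
    integral_const_mul, integral_cos_two_pi_nat_mul_eq_zero hp]
  norm_num

lemma integral_mul_one_add_mul_cos (hf : IntervalIntegrable f volume (-(1 / 2)) (1 / 2)) :
    ∫ τ in (-(1 / 2) : ℝ)..(1 / 2), f τ * (1 + ε * cos (2 * π * p * τ)) =
      (∫ τ in (-(1 / 2) : ℝ)..(1 / 2), f τ) +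
        ε * ∫ τ in (-(1 / 2) : ℝ)..(1 / 2), f τ * cos (2 * π * p * τ) := by
  simp_rw [mul_add, mul_one, mul_left_comm _ ε]
  rw [integral_add hf ((hf.mul_continuousOn (by fun_prop)).const_mul ε), integral_const_mul]

lemma le_integral_add_mul_cos_coeff_le (hf : IntervalIntegrable f volume (-(1 / 2)) (1 / 2))
    {c C : ℝ} (hcf : ∀ τ ∈ Icc (-(1 / 2) : ℝ) (1 / 2), c ≤ f τ)
    (hfC : ∀ τ ∈ Icc (-(1 / 2) : ℝ) (1 / 2), f τ ≤ C) (hp : p ≠ 0) (hε : |ε| ≤ 1) :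
    c ≤ (∫ τ in (-(1 / 2) : ℝ)..(1 / 2), f τ) +
        ε * (∫ τ in (-(1 / 2) : ℝ)..(1 / 2), f τ * cos (2 * π * p * τ)) ∧
      (∫ τ in (-(1 / 2) : ℝ)..(1 / 2), f τ) +
        ε * (∫ τ in (-(1 / 2) : ℝ)..(1 / 2), f τ * cos (2 * π * p * τ)) ≤ C := by
  have hw : ContinuousOn (fun τ => 1 + ε * cos (2 * π * p * τ)) (uIcc (-(1 / 2)) (1 / 2)) := by
    fun_prop
  have hw0 : ∀ τ ∈ Icc (-(1 / 2) : ℝ) (1 / 2), 0 ≤ 1 + ε * cos (2 * π * p * τ) :=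
    fun τ _ => one_add_mul_cos_nonneg hε _
  have hab : (-(1 / 2) : ℝ) ≤ 1 / 2 := by norm_num
  have lower := mul_integral_le_integral_mul_of_le hab hf hw hw0 hcf
  have upper := integral_mul_le_mul_integral_of_le hab hf hw hw0 hfC
  rw [integral_one_add_mul_cos_two_pi_nat_mul hp, mul_one, integral_mul_one_add_mul_cos hf]
    at lower upper
  exact ⟨lower, upper⟩

end CosineWeight

theorem fourier_coeff_sup_inf_bound (f : ℝ → ℝ)
    (hint : IntervalIntegrable f MeasureTheory.volume (-(1 / 2)) (1 / 2))
    (hbdd : ∃ M : ℝ, ∀ τ ∈ Set.Icc (-(1 / 2) : ℝ) (1 / 2), |f τ| ≤ M)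
    (a : ℕ → ℝ)
    (ha0 : a 0 = ∫ τ in (-(1 / 2) : ℝ)..(1 / 2), f τ)
    (hap : ∀ p : ℕ, 1 ≤ p →
      a p = ∫ τ in (-(1 / 2) : ℝ)..(1 / 2), f τ * Real.cos (2 * Real.pi * p * τ)) :
    a 0 + (1 / 2) * (⨆ p : {p : ℕ // 1 ≤ p}, |a p|) ≤
      sSup (f '' Set.Icc (-(1 / 2) : ℝ) (1 / 2)) ∧
    sInf (f '' Set.Icc (-(1 / 2) : ℝ) (1 / 2)) ≤
      a 0 - (1 / 2) * (⨆ p : {p : ℕ // 1 ≤ p}, |a p|) := by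
  obtain ⟨M, hM⟩ := hbdd
  set K := Icc (-(1 / 2) : ℝ) (1 / 2)
  have hfS : ∀ τ ∈ K, f τ ≤ sSup (f '' K) := fun τ hτ =>
    le_csSup ⟨M, by rintro _ ⟨x, hx, rfl⟩; exact (abs_le.mp (hM x hx)).2⟩ ⟨τ, hτ, rfl⟩
  have hIf : ∀ τ ∈ K, sInf (f '' K) ≤ f τ := fun τ hτ =>
    csInf_le ⟨-M, by rintro _ ⟨x, hx, rfl⟩; exact (abs_le.mp (hM x hx)).1⟩
      ⟨τ, hτ, rfl⟩
  have hcoeff (p : {p : ℕ // 1 ≤ p}) (ε : ℝ) (hε : |ε| ≤ 1) :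
      sInf (f '' K) ≤ a 0 + ε * a p ∧ a 0 + ε * a p ≤ sSup (f '' K) := by
    rw [ha0, hap p p.2]
    exact le_integral_add_mul_cos_coeff_le hint hIf hfS (by have := p.2; omega) hε
  have : Nonempty {p : ℕ // 1 ≤ p} := ⟨⟨1, le_rfl⟩⟩
  have hsup : (⨆ p : {p : ℕ // 1 ≤ p}, |a p|) ≤ sSup (f '' K) - a 0 := ciSup_le fun p => by
    rcases abs_cases (a p) with ⟨h, -⟩ | ⟨h, -⟩
    · linarith [(hcoeff p 1 (by simp)).2]
    · linarith [(hcoeff p (-1) (by simp)).2]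
  have hinf : (⨆ p : {p : ℕ // 1 ≤ p}, |a p|) ≤ a 0 - sInf (f '' K) := ciSup_le fun p => by
    rcases abs_cases (a p) with ⟨h, -⟩ | ⟨h, -⟩
    · linarith [(hcoeff p (-1) (by simp)).1]
    · linarith [(hcoeff p 1 (by simp)).1]
  have hnonneg : 0 ≤ ⨆ p : {p : ℕ // 1 ≤ p}, |a p| := Real.iSup_nonneg fun p => abs_nonneg _
  constructor <;> linarith
end

section
/- Let z₀ ∈ (0, π/6) be the unique root of sin z = 3^{−3/2}·cos(3z) in that interval. Then min_{z ∈ [0, π]} max{ |sin z|, 3^{−3/2}|cos 3z| } = sin z₀. -/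
open Real Set

/- Below the crossing point `a` the term `|sin z|` alone is too small, but `c |cos 3z|` is at
least `c cos 3a` there; symmetrically near `π`, since `z ↦ π - z` preserves `|cos 3z|`. In between,
`sin z ≥ sin a`. So on `[0, π]` the maximum never drops below `min (sin a) (c cos 3a)`, and at the
crossing point both terms equal this value. -/

theorem Real.sin_le_sin_of_mem_Icc {a z : ℝ} (ha : -(π / 2) ≤ a) (hz : z ∈ Icc a (π - a)) :
    sin a ≤ sin z := by
  rcases le_or_gt z (π / 2) with hz' | hz'
  · exact sin_le_sin_of_le_of_le_pi_div_two ha hz' hz.1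
  · rw [← sin_pi_sub z]
    exact sin_le_sin_of_le_of_le_pi_div_two ha (by linarith) (by linarith [hz.2])

theorem Real.abs_cos_three_mul_pi_sub (z : ℝ) : |cos (3 * (π - z))| = |cos (3 * z)| := by
  have h : 3 * (π - z) = π - (3 * z - 2 * π) := by ring
  rw [h, cos_pi_sub, cos_sub_two_pi, abs_neg]

theorem Real.cos_three_mul_le_abs_cos_three_mul {a z : ℝ} (hz : 0 ≤ z) (hza : z ≤ a)
    (ha : a ≤ π / 3) : cos (3 * a) ≤ |cos (3 * z)| :=
  (cos_le_cos_of_nonneg_of_le_pi (by linarith) (by linarith) (by linarith)).trans (le_abs_self _)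

theorem Real.min_le_max_abs_sin_abs_cos_three_mul {a c z : ℝ} (hc : 0 ≤ c) (ha₀ : 0 ≤ a)
    (ha : a ≤ π / 3) (hz : z ∈ Icc 0 π) :
    min (sin a) (c * cos (3 * a)) ≤ max |sin z| (c * |cos (3 * z)|) := by
  rcases lt_or_ge z a with hza | haz
  · exact (min_le_right _ _).trans <| le_max_of_le_right <|
      mul_le_mul_of_nonneg_left (cos_three_mul_le_abs_cos_three_mul hz.1 hza.le ha) hc
  rcases le_or_gt z (π - a) with hzπ | hzπ
  · exact (min_le_left _ _).trans <| le_max_of_le_left <|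
      (sin_le_sin_of_mem_Icc (by linarith) ⟨haz, hzπ⟩).trans (le_abs_self _)
  · rw [← abs_cos_three_mul_pi_sub z]
    exact (min_le_right _ _).trans <| le_max_of_le_right <|
      mul_le_mul_of_nonneg_left
        (cos_three_mul_le_abs_cos_three_mul (by linarith [hz.2]) (by linarith) ha) hc

theorem min_max_sin_cos_general (z₀ : ℝ) (hz₀ : z₀ ∈ Set.Ioo (0 : ℝ) (Real.pi / 6))
    (hroot : Real.sin z₀ = 3 ^ (-(3 : ℝ) / 2) * Real.cos (3 * z₀)) :
    IsLeast ((fun z => max |Real.sin z| (3 ^ (-(3 : ℝ) / 2) * |Real.cos (3 * z)|)) ''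
      Set.Icc (0 : ℝ) Real.pi) (Real.sin z₀) := by
  obtain ⟨hz₀_pos, hz₀_lt⟩ := hz₀
  have hsin : 0 < sin z₀ := sin_pos_of_pos_of_lt_pi hz₀_pos (by linarith [pi_pos])
  have hcos : 0 < cos (3 * z₀) := cos_pos_of_mem_Ioo ⟨by linarith [pi_pos], by linarith⟩
  refine ⟨⟨z₀, ⟨hz₀_pos.le, by linarith [pi_pos]⟩, ?_⟩, ?_⟩
  · simp only [abs_of_pos hsin, abs_of_pos hcos, ← hroot, max_self]
  · rintro _ ⟨z, hz, rfl⟩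
    have h := min_le_max_abs_sin_abs_cos_three_mul (c := 3 ^ (-(3 : ℝ) / 2)) (by positivity)
      hz₀_pos.le (by linarith [pi_pos]) hz
    rwa [← hroot, min_self] at h

theorem min_max_sin_cos (z₀ : ℝ) (hz₀ : z₀ ∈ Set.Ioo (0 : ℝ) (Real.pi / 6))
    (hroot : Real.sin z₀ = 3 ^ (-(3 : ℝ) / 2) * Real.cos (3 * z₀))
    (huniq : ∀ z ∈ Set.Ioo (0 : ℝ) (Real.pi / 6),
      Real.sin z = 3 ^ (-(3 : ℝ) / 2) * Real.cos (3 * z) → z = z₀) :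
    IsLeast ((fun z => max |Real.sin z| (3 ^ (-(3 : ℝ) / 2) * |Real.cos (3 * z)|)) ''
      Set.Icc (0 : ℝ) Real.pi) (Real.sin z₀) :=
  min_max_sin_cos_general z₀ hz₀ hroot
end

section
/- The equation sin z = 3^{−3/2} cos(3z) for z ∈ (0, π/6) is equivalent to the cubic equation 3^{3/2}·t³ + 3t² + 3^{3/2}·t − 1 = 0 in t = tan z, and this cubic has the real root t = c₂, where c₂ = ((78√3 + 54√11)^{1/3} − √3)/9 − 8/(3·(78√3 + 54√11)^{1/3}). -/
/-!
Dividing `a sin z = cos 3z = 4 cos³ z - 3 cos z` by `cos³ z` and using `sec² z = 1 + tan² z`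
turns it into `a t (1 + t²) = 1 - 3 t²` with `t = tan z`. For `a = 3√3` the shift
`t = s - √3/9` depresses the cubic to `s³ + (8/9) s - 52√3/243`, whose Cardano root is
`s = u - 8/(27 u)` with `u³ = (78√3 + 54√11)/729`.
-/

open Real

theorem Real.rpow_three_div_two {x : ℝ} (hx : 0 ≤ x) : x ^ ((3 : ℝ) / 2) = x * √x := by
  rw [show (3 : ℝ) / 2 = 1 + 1 / 2 by norm_num, rpow_add' hx (by norm_num), rpow_one,
    sqrt_eq_rpow]

theorem Real.rpow_neg_three_div_two {x : ℝ} (hx : 0 ≤ x) :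
    x ^ (-(3 : ℝ) / 2) = (x * √x)⁻¹ := by
  rw [neg_div, rpow_neg hx, rpow_three_div_two hx]

section TangentCubic

variable {z : ℝ}

theorem Real.sin_div_cos_pow_three (hz : cos z ≠ 0) :
    sin z / cos z ^ 3 = tan z * (1 + tan z ^ 2) := by
  rw [← inv_inv (1 + tan z ^ 2), inv_one_add_tan_sq hz, tan_eq_sin_div_cos]
  field_simp

theorem Real.cos_three_mul_div_cos_pow_three (hz : cos z ≠ 0) :
    cos (3 * z) / cos z ^ 3 = 1 - 3 * tan z ^ 2 := by
  rw [cos_three_mul, tan_eq_sin_div_cos]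
  field_simp
  linear_combination 3 * sin_sq_add_cos_sq z

theorem Real.mul_sin_eq_cos_three_mul_iff (a : ℝ) (hz : cos z ≠ 0) :
    a * sin z = cos (3 * z) ↔ a * tan z ^ 3 + 3 * tan z ^ 2 + a * tan z - 1 = 0 := by
  rw [← div_left_inj' (pow_ne_zero 3 hz), mul_div_assoc, sin_div_cos_pow_three hz,
    cos_three_mul_div_cos_pow_three hz]
  constructor <;> intro h <;> linear_combination h

end TangentCubic

theorem cardano_root {K : Type*} [Field K] [CharZero K] {p q u : K} (hu : u ≠ 0)
    (h : u ^ 6 + q * u ^ 3 = p ^ 3 / 27) :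
    (u - p / (3 * u)) ^ 3 + p * (u - p / (3 * u)) + q = 0 := by
  have hu3 : u ^ 3 ≠ 0 := pow_ne_zero 3 hu
  calc (u - p / (3 * u)) ^ 3 + p * (u - p / (3 * u)) + q
      = (u ^ 6 + q * u ^ 3 - p ^ 3 / 27) / u ^ 3 := by field_simp; ring
    _ = 0 := by rw [h, sub_self, zero_div]

theorem tan_cubic_eq_depressed (t : ℝ) :
    3 * √3 * t ^ 3 + 3 * t ^ 2 + 3 * √3 * t - 1 =
      3 * √3 * ((t + √3 / 9) ^ 3 + 8 / 9 * (t + √3 / 9) - 52 * √3 / 243) := by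
  have h3 : √3 ^ 2 = 3 := sq_sqrt (by norm_num)
  linear_combination (-t ^ 2 - √3 * t / 9 - √3 ^ 2 / 243 + 1 / 3) * h3

theorem tan_cubic_cardano_root {a : ℝ} (ha : a ^ 3 = 78 * √3 + 54 * √11) :
    3 * √3 * ((a - √3) / 9 - 8 / (3 * a)) ^ 3 + 3 * ((a - √3) / 9 - 8 / (3 * a)) ^ 2 +
      3 * √3 * ((a - √3) / 9 - 8 / (3 * a)) - 1 = 0 := by
  have h3 : √3 ^ 2 = 3 := sq_sqrt (by norm_num)
  have h11 : √11 ^ 2 = 11 := sq_sqrt (by norm_num)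
  have ha0 : a ≠ 0 := by
    rintro rfl
    have : 0 < 78 * √3 + 54 * √11 := by positivity
    simp_all
  have hroot := cardano_root (p := 8 / 9) (q := -(52 * √3 / 243)) (u := a / 9) (by positivity)
    (by linear_combination ((a ^ 3 + 78 * √3 + 54 * √11) / 531441 - 52 * √3 / 177147) * ha
      - 6084 / 531441 * h3 + 2916 / 531441 * h11)
  rw [tan_cubic_eq_depressed]
  convert congrArg (3 * √3 * ·) hroot using 2
  · field_simp; ring
  · simp

theorem cubic_equation_for_tan (c₂ : ℝ)
    (hc₂ : c₂ = ((78 * Real.sqrt 3 + 54 * Real.sqrt 11) ^ ((1 : ℝ) / 3) - Real.sqrt 3) / 9 -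
      8 / (3 * (78 * Real.sqrt 3 + 54 * Real.sqrt 11) ^ ((1 : ℝ) / 3))) :
    (∀ z ∈ Set.Ioo (0 : ℝ) (Real.pi / 6),
      (Real.sin z = 3 ^ (-(3 : ℝ) / 2) * Real.cos (3 * z) ↔
        3 ^ ((3 : ℝ) / 2) * Real.tan z ^ 3 + 3 * Real.tan z ^ 2 +
          3 ^ ((3 : ℝ) / 2) * Real.tan z - 1 = 0)) ∧
    3 ^ ((3 : ℝ) / 2) * c₂ ^ 3 + 3 * c₂ ^ 2 + 3 ^ ((3 : ℝ) / 2) * c₂ - 1 = 0 := by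
  rw [rpow_neg_three_div_two zero_le_three, rpow_three_div_two zero_le_three]
  refine ⟨fun z hz => ?_, ?_⟩
  · have hcos : cos z ≠ 0 :=
      (cos_pos_of_mem_Ioo ⟨by linarith [hz.1, pi_pos], by linarith [hz.2, pi_pos]⟩).ne'
    rw [eq_inv_mul_iff_mul_eq₀ (by positivity)]
    exact mul_sin_eq_cos_three_mul_iff _ hcos
  · have hcube : ((78 * √3 + 54 * √11) ^ ((1 : ℝ) / 3)) ^ 3 = 78 * √3 + 54 * √11 := by
      rw [one_div]
      exact_mod_cast rpow_inv_natCast_pow (by positivity) three_ne_zero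
    exact hc₂ ▸ tan_cubic_cardano_root hcube
end

section
/- For all real z, max{ |sin z|, 3^{−3/2}|cos 3z| } ≥ c₁, where c₁ = c₂/√(c₂²+1) and c₂ = ((78√3 + 54√11)^{1/3} − √3)/9 − 8/(3(78√3 + 54√11)^{1/3}). -/
/-!
Let `z₀ = arctan c₂`, so that `c₁ = sin z₀`. Cardano's formula says that `c₂` solves
`3√3 t (1 + t²) = 1 - 3t²`, which by the triple-angle formula is the crossing condition
`sin z₀ = 3^(-3/2) cos 3z₀`; in particular `sin z₀ ≤ 3^(-3/2) < 1/2`. If `|sin z| < sin z₀`,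
then, as `s ↦ 3s - 4s³` is increasing on `[-1/2, 1/2]`, `|sin 3z| ≤ sin 3z₀`, hence
`|cos 3z| ≥ |cos 3z₀|` and `3^(-3/2) |cos 3z| ≥ sin z₀`.
-/

open Real

lemma three_mul_sub_four_mul_pow_three_le {x y : ℝ} (hx : -(1 / 2) ≤ x) (hxy : x ≤ y)
    (hy : y ≤ 1 / 2) : 3 * x - 4 * x ^ 3 ≤ 3 * y - 4 * y ^ 3 := by
  have hquad : x ^ 2 + x * y + y ^ 2 ≤ 3 / 4 := by nlinarith
  nlinarith [mul_nonneg (sub_nonneg.2 hxy)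
    (by linarith : (0 : ℝ) ≤ 3 - 4 * (x ^ 2 + x * y + y ^ 2))]

lemma abs_three_mul_sub_four_mul_pow_three_le {s c : ℝ} (hs : |s| ≤ c) (hc : c ≤ 1 / 2) :
    |3 * s - 4 * s ^ 3| ≤ 3 * c - 4 * c ^ 3 := by
  obtain ⟨hcs, hsc⟩ := abs_le.1 hs
  refine abs_le.2 ⟨?_, three_mul_sub_four_mul_pow_three_le (by linarith) hsc hc⟩
  have := three_mul_sub_four_mul_pow_three_le (by linarith) hcs (by linarith)
  linarith

lemma abs_cos_le_abs_cos_of_abs_sin_le {x y : ℝ} (h : |sin x| ≤ |sin y|) :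
    |cos y| ≤ |cos x| := by
  rw [← sq_le_sq] at h ⊢
  linarith [sin_sq_add_cos_sq x, sin_sq_add_cos_sq y]

lemma rpow_neg_three_halves : (3 : ℝ) ^ (-(3 : ℝ) / 2) = (3 * √3)⁻¹ := by
  rw [neg_div, rpow_neg (by norm_num), sqrt_eq_rpow, ← rpow_one_add' (by norm_num) (by norm_num)]
  norm_num

theorem sin_le_max_abs_sin_of_sin_eq_cos_three_mul {z₀ : ℝ}
    (h : sin z₀ = 3 ^ (-(3 : ℝ) / 2) * cos (3 * z₀)) (z : ℝ) :
    sin z₀ ≤ max |sin z| (3 ^ (-(3 : ℝ) / 2) * |cos (3 * z)|) := by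
  set κ : ℝ := 3 ^ (-(3 : ℝ) / 2)
  rcases le_or_gt (sin z₀) |sin z| with hle | hlt
  · exact le_max_of_le_left hle
  refine le_max_of_le_right ?_
  have hκ : 0 < κ ∧ κ ≤ 1 / 2 := by
    have : 1 ≤ √3 := by simp
    simp only [κ, rpow_neg_three_halves]
    exact ⟨by positivity, inv_le_of_inv_le₀ (by norm_num) (by linarith)⟩
  have hsin_le : sin z₀ ≤ 1 / 2 := by
    rw [h]
    nlinarith [cos_le_one (3 * z₀)]
  have hsin3 : |sin (3 * z)| ≤ |sin (3 * z₀)| := by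
    rw [sin_three_mul, sin_three_mul]
    exact (abs_three_mul_sub_four_mul_pow_three_le hlt.le hsin_le).trans (le_abs_self _)
  calc sin z₀ = κ * cos (3 * z₀) := h
    _ ≤ κ * |cos (3 * z₀)| := mul_le_mul_of_nonneg_left (le_abs_self _) hκ.1.le
    _ ≤ κ * |cos (3 * z)| :=
      mul_le_mul_of_nonneg_left (abs_cos_le_abs_cos_of_abs_sin_le hsin3) hκ.1.le

lemma cos_three_mul_arctan (t : ℝ) :
    cos (3 * arctan t) = (1 - 3 * t ^ 2) / (1 + t ^ 2) * cos (arctan t) := by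
  have hcube : cos (arctan t) ^ 3 = cos (arctan t) / (1 + t ^ 2) := by
    rw [pow_succ, cos_sq_arctan]
    ring
  rw [cos_three_mul, hcube]
  field_simp
  ring

lemma sin_arctan_eq_of_cubic {t : ℝ} (h : 3 * √3 * t * (1 + t ^ 2) = 1 - 3 * t ^ 2) :
    sin (arctan t) = 3 ^ (-(3 : ℝ) / 2) * cos (3 * arctan t) := by
  rw [cos_three_mul_arctan, ← h, rpow_neg_three_halves, sin_arctan, cos_arctan]
  field_simp

lemma cubic_of_cardano {a t : ℝ} (ha : a ^ 3 = 78 * √3 + 54 * √11)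
    (ht : t = (a - √3) / 9 - 8 / (3 * a)) :
    3 * √3 * t * (1 + t ^ 2) = 1 - 3 * t ^ 2 := by
  have h3 : √3 ^ 2 = 3 := sq_sqrt (by norm_num)
  have h11 : √11 ^ 2 = 11 := sq_sqrt (by norm_num)
  have ha0 : a ≠ 0 := (pow_ne_zero_iff three_ne_zero).1 (by rw [ha]; positivity)
  -- `t + √3/9` solves the depressed cubic `y³ + 8y/9 = 52√3/243`; Cardano writes the root as
  -- `u - v` with `u = a/9`, `v = 8/(3a)`, `3uv = 8/9`, and `u³ - v³ = 52√3/243` because `a³`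
  -- is a root of `B² - 156√3 B - 13824`.
  have hB : (a ^ 3) ^ 2 - 156 * √3 * a ^ 3 = 13824 := by
    rw [ha]
    linear_combination (-6084 : ℝ) * h3 + 2916 * h11
  set y := a / 9 - 8 / (3 * a) with hy_def
  have hy : y ^ 3 + 8 / 9 * y = 52 * √3 / 243 := by
    rw [hy_def]
    field_simp
    linear_combination 6561 * hB
  rw [show t = y - √3 / 9 by rw [ht]; ring]
  linear_combination (3 * √3) * hy + (√3 * y / 9 - y ^ 2 - (√3 ^ 2 - 81) / 243) * h3

theorem max_sin_cos_lower_bound (c₂ c₁ : ℝ)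
    (hc₂ : c₂ = ((78 * Real.sqrt 3 + 54 * Real.sqrt 11) ^ ((1 : ℝ) / 3) - Real.sqrt 3) / 9 -
      8 / (3 * (78 * Real.sqrt 3 + 54 * Real.sqrt 11) ^ ((1 : ℝ) / 3)))
    (hc₁ : c₁ = c₂ / Real.sqrt (c₂ ^ 2 + 1)) :
    ∀ z : ℝ, c₁ ≤ max |Real.sin z| (3 ^ (-(3 : ℝ) / 2) * |Real.cos (3 * z)|) := by
  have ha : ((78 * √3 + 54 * √11) ^ ((1 : ℝ) / 3)) ^ 3 = 78 * √3 + 54 * √11 := by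
    rw [one_div]
    exact_mod_cast rpow_inv_natCast_pow (by positivity) three_ne_zero
  have hc₁' : c₁ = sin (arctan c₂) := by rw [hc₁, sin_arctan, add_comm]
  rw [hc₁']
  exact sin_le_max_abs_sin_of_sin_eq_cos_three_mul
    (sin_arctan_eq_of_cubic (cubic_of_cardano ha hc₂))
end

section
/- Suppose ξ > 0 satisfies ξ < ξ₀ := (c₁/(2ζ(3/2)))^{2/3}. Then for every ℓ ≥ 1, sup_{p∈ℕ, p≥1} |φ_p(ℓ)| ≥ c₀ := (c₁ − 2ζ(3/2)ξ^{3/2})/(πξ) > 0. -/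
/-!
Up to the factor `1 / (π ξ)`, `φ_p(ℓ)` is its `k = 0` term `sin (2π√ℓ p - π/4) / p^{3/2}` plus a
tail which, since `(k²/ξ² + p²)^{3/4} ≥ (|k|/ξ)^{3/2}`, is at most `2 ζ(3/2) ξ^{3/2}` in absolute
value. So it suffices that `|sin (2π√ℓ p - π/4)| / p^{3/2} ≥ c₁` for `p = 1` or `p = 3`.
Writing `y = 2π√ℓ - π/4`, the `p = 3` term is `cos (3y) / (3√3)`. The constant `c₂` is the
real root of `3√3 c³ + 3c² + 3√3 c = 1` (Cardano), and for `c₂ = tan θ`, `c₁ = sin θ` this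
cubic says `cos 3θ = 3√3 sin θ`. Hence if `|sin y| < sin θ`, then
`|cos 3y| = |cos y| (1 - 4 sin² y) ≥ cos θ (1 - 4 sin² θ) = 3√3 c₁`.
-/

open Real

theorem cubic_eq_one_of_cardano {s T c : ℝ} (hs : s ^ 2 = 3) (hT : T ≠ 0)
    (hT6 : T ^ 6 = 156 * s * T ^ 3 + 13824) (hc : c = (T - s) / 9 - 8 / (3 * T)) :
    3 * s * c ^ 3 + 3 * c ^ 2 + 3 * s * c = 1 := by
  -- `c = t - s/9` depresses the cubic to `t³ + 8t/9 = 52s/243`, which Cardano solves by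
  -- `t = u + v` with `u = T/9`, `v = -8/(3T)`, `uv = -8/27`.
  set t := T / 9 - 8 / (3 * T)
  have hsum_cubes : t ^ 3 + 8 / 9 * t = (T / 9) ^ 3 + (-8 / (3 * T)) ^ 3 := by
    simp only [t]; field_simp; ring
  have ht : t ^ 3 + 8 / 9 * t = 52 * s / 243 := by
    rw [hsum_cubes]; field_simp; linear_combination 6561 * hT6
  have hct : c = t - s / 9 := by rw [hc]; ring
  rw [hct]
  linear_combination 3 * s * ht + (-t ^ 2 + s * t / 9 + (81 - s ^ 2) / 243) * hs

theorem pos_of_cubic_eq_one {s c : ℝ} (hs : s ^ 2 = 3) (hs0 : 0 < s)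
    (h : 3 * s * c ^ 3 + 3 * c ^ 2 + 3 * s * c = 1) : 0 < c := by
  by_contra! hc
  have hs1 : 1 ≤ 2 * s := by nlinarith
  nlinarith [mul_nonneg (mul_nonneg hs0.le (neg_nonneg.2 hc)) (sq_nonneg (c + 1)),
    mul_nonneg (sq_nonneg c) (sub_nonneg.2 hs1)]

theorem cubic_eq_one_of_eq_cbrt_formula {c : ℝ}
    (hc : c = ((78 * √3 + 54 * √11) ^ ((1 : ℝ) / 3) - √3) / 9 -
      8 / (3 * (78 * √3 + 54 * √11) ^ ((1 : ℝ) / 3))) :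
    3 * √3 * c ^ 3 + 3 * c ^ 2 + 3 * √3 * c = 1 := by
  have hs : √3 ^ 2 = 3 := sq_sqrt (by norm_num)
  have hv : √11 ^ 2 = 11 := sq_sqrt (by norm_num)
  set A := 78 * √3 + 54 * √11
  have hA : 0 < A := by positivity
  -- `(A - 78√3)² = 54² · 11` eliminates `√11`
  have hA2 : A ^ 2 = 156 * √3 * A + 13824 := by linear_combination -6084 * hs + 2916 * hv
  have hT3 : (A ^ ((1 : ℝ) / 3)) ^ 3 = A := by
    rw [← rpow_natCast, ← rpow_mul hA.le]; norm_num
  refine cubic_eq_one_of_cardano hs (rpow_pos_of_pos hA _).ne' ?_ hc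
  linear_combination ((A ^ ((1 : ℝ) / 3)) ^ 3 + A - 156 * √3) * hT3 + hA2

theorem sqrt_one_sub_sq_mul_le_abs_cos_three_mul {a y : ℝ} (h : |sin y| ≤ a) :
    √(1 - a ^ 2) * (1 - 4 * a ^ 2) ≤ |cos (3 * y)| := by
  have hcos3 : cos (3 * y) = cos y * (1 - 4 * sin y ^ 2) := by
    rw [cos_three_mul]; linear_combination 4 * cos y * sin_sq_add_cos_sq y
  have hsin2 : sin y ^ 2 ≤ a ^ 2 := sq_le_sq' (abs_le.1 h).1 (abs_le.1 h).2
  rcases le_or_gt (1 - 4 * a ^ 2) 0 with hneg | hpos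
  · exact (mul_nonpos_of_nonneg_of_nonpos (sqrt_nonneg _) hneg).trans (abs_nonneg _)
  · have hcos : √(1 - a ^ 2) ≤ |cos y| := by
      rw [← sqrt_sq_eq_abs]; apply sqrt_le_sqrt; nlinarith [sin_sq_add_cos_sq y]
    rw [hcos3, abs_mul, abs_of_nonneg (by linarith : 0 ≤ 1 - 4 * sin y ^ 2)]
    exact mul_le_mul hcos (by linarith) hpos.le (abs_nonneg _)

theorem sqrt_one_sub_sq_mul_eq_of_cubic {s c c₁ : ℝ}
    (h : 3 * s * c ^ 3 + 3 * c ^ 2 + 3 * s * c = 1) (hc₁ : c₁ = c / √(c ^ 2 + 1)) :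
    √(1 - c₁ ^ 2) * (1 - 4 * c₁ ^ 2) = 3 * s * c₁ := by
  have hw : 0 < √(c ^ 2 + 1) := sqrt_pos.2 (by positivity)
  have hw2 : √(c ^ 2 + 1) ^ 2 = c ^ 2 + 1 := sq_sqrt (by positivity)
  have h1 : 1 - c₁ ^ 2 = (1 / √(c ^ 2 + 1)) ^ 2 := by
    rw [hc₁]; field_simp; linear_combination hw2
  rw [h1, sqrt_sq (by positivity), hc₁]
  field_simp
  linear_combination (1 - 3 * c * s) * hw2 - h

theorem le_abs_sin_or_le_abs_cos_three_mul {s c c₁ : ℝ}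
    (h : 3 * s * c ^ 3 + 3 * c ^ 2 + 3 * s * c = 1) (hc₁ : c₁ = c / √(c ^ 2 + 1)) (y : ℝ) :
    c₁ ≤ |sin y| ∨ 3 * s * c₁ ≤ |cos (3 * y)| := by
  refine or_iff_not_imp_left.2 fun hy => ?_
  rw [← sqrt_one_sub_sq_mul_eq_of_cubic h hc₁]
  exact sqrt_one_sub_sq_mul_le_abs_cos_three_mul (not_le.1 hy).le

theorem three_rpow_three_halves : (3 : ℝ) ^ (3 / 2 : ℝ) = 3 * √3 := by
  rw [show (3 / 2 : ℝ) = 1 + 1 / 2 by norm_num, rpow_add (by norm_num), rpow_one, sqrt_eq_rpow]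

theorem exists_le_abs_sin_mul_sub_pi_div_four_div_rpow {c c₁ : ℝ}
    (h : 3 * √3 * c ^ 3 + 3 * c ^ 2 + 3 * √3 * c = 1) (hc₁ : c₁ = c / √(c ^ 2 + 1)) (z : ℝ) :
    ∃ p : ℕ, 1 ≤ p ∧ c₁ ≤ |sin (z * p - π / 4) / (p : ℝ) ^ (3 / 2 : ℝ)| := by
  rcases le_abs_sin_or_le_abs_cos_three_mul h hc₁ (z - π / 4) with h1 | h3
  · exact ⟨1, le_rfl, by simpa using h1⟩
  · refine ⟨3, by norm_num, ?_⟩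
    have hsin : sin (z * (3 : ℕ) - π / 4) = cos (3 * (z - π / 4)) := by
      rw [← sin_add_pi_div_two]; congr 1; push_cast; ring
    rw [hsin, Nat.cast_ofNat, three_rpow_three_halves, abs_div,
      abs_of_pos (by positivity : (0 : ℝ) < 3 * √3), le_div_iff₀ (by positivity)]
    linarith

theorem norm_tsum_int_sub_apply_zero_le {E : Type*} [NormedAddCommGroup E] [CompleteSpace E]
    {f : ℤ → E} {g : ℕ → ℝ} (hg : Summable g)
    (hpos : ∀ n : ℕ, ‖f (n + 1)‖ ≤ g n) (hneg : ∀ n : ℕ, ‖f (-(n + 1))‖ ≤ g n) :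
    ‖∑' k, f k - f 0‖ ≤ 2 * ∑' n, g n := by
  have hsp : Summable fun n : ℕ => f (n + 1) := .of_norm_bounded hg hpos
  have hsn : Summable fun n : ℕ => f (-(n + 1)) := .of_norm_bounded hg hneg
  calc ‖∑' k, f k - f 0‖ = ‖∑' n : ℕ, f (n + 1) + ∑' n : ℕ, f (-(n + 1))‖ := by
        rw [tsum_of_add_one_of_neg_add_one hsp hsn]; congr 1; abel
    _ ≤ ∑' n, g n + ∑' n, g n := norm_add_le_of_le
        (tsum_of_norm_bounded hg.hasSum hpos) (tsum_of_norm_bounded hg.hasSum hneg)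
    _ = 2 * ∑' n, g n := by ring

theorem summable_one_div_nat_add_one_rpow {s : ℝ} (hs : 1 < s) :
    Summable fun n : ℕ => 1 / ((n : ℝ) + 1) ^ s := by
  refine ((summable_one_div_nat_add_rpow 1 s).2 hs).congr fun n => ?_
  rw [abs_of_nonneg (by positivity)]

theorem sq_rpow_three_quarters {t : ℝ} (ht : 0 ≤ t) : (t ^ 2) ^ (3 / 4 : ℝ) = t ^ (3 / 2 : ℝ) := by
  rw [← rpow_natCast_mul ht]; norm_num

theorem one_div_rpow_three_quarters_le {ξ : ℝ} (hξ : 0 < ξ) (p : ℝ) {x : ℝ} (hx : x ≠ 0) :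
    1 / (x ^ 2 / ξ ^ 2 + p ^ 2) ^ (3 / 4 : ℝ) ≤ ξ ^ (3 / 2 : ℝ) * (1 / |x| ^ (3 / 2 : ℝ)) := by
  have hx2 : (x ^ 2 / ξ ^ 2) ^ (3 / 4 : ℝ) = |x| ^ (3 / 2 : ℝ) / ξ ^ (3 / 2 : ℝ) := by
    rw [← sq_abs x, ← div_pow, sq_rpow_three_quarters (by positivity),
      div_rpow (abs_nonneg x) hξ.le]
  have hx0 : 0 < |x| := abs_pos.2 hx
  calc 1 / (x ^ 2 / ξ ^ 2 + p ^ 2) ^ (3 / 4 : ℝ) ≤ 1 / (x ^ 2 / ξ ^ 2) ^ (3 / 4 : ℝ) := by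
        gcongr
        exact le_add_of_nonneg_right (sq_nonneg p)
    _ = ξ ^ (3 / 2 : ℝ) * (1 / |x| ^ (3 / 2 : ℝ)) := by rw [hx2]; field_simp

theorem abs_tsum_lattice_sub_zero_term_le {ξ p : ℝ} (hξ : 0 < ξ) (hp : 0 < p) (F : ℝ → ℝ)
    (hF : ∀ x, |F x| ≤ 1) :
    |(∑' k : ℤ, F √((k : ℝ) ^ 2 / ξ ^ 2 + p ^ 2) / ((k : ℝ) ^ 2 / ξ ^ 2 + p ^ 2) ^ (3 / 4 : ℝ))
      - F p / p ^ (3 / 2 : ℝ)|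
      ≤ 2 * (∑' n : ℕ, 1 / ((n : ℝ) + 1) ^ (3 / 2 : ℝ)) * ξ ^ (3 / 2 : ℝ) := by
  have hterm : ∀ x : ℝ, x ≠ 0 →
      ‖F √(x ^ 2 / ξ ^ 2 + p ^ 2) / (x ^ 2 / ξ ^ 2 + p ^ 2) ^ (3 / 4 : ℝ)‖
        ≤ ξ ^ (3 / 2 : ℝ) * (1 / |x| ^ (3 / 2 : ℝ)) := fun x hx => by
    have hden : 0 < (x ^ 2 / ξ ^ 2 + p ^ 2) ^ (3 / 4 : ℝ) := by positivity
    rw [Real.norm_eq_abs, abs_div, abs_of_pos hden]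
    exact (div_le_div_of_nonneg_right (hF _) (by positivity)).trans
      (one_div_rpow_three_quarters_le hξ p hx)
  set f : ℤ → ℝ := fun k =>
    F √((k : ℝ) ^ 2 / ξ ^ 2 + p ^ 2) / ((k : ℝ) ^ 2 / ξ ^ 2 + p ^ 2) ^ (3 / 4 : ℝ)
  have hzero : f 0 = F p / p ^ (3 / 2 : ℝ) := by
    simp [f, sqrt_sq hp.le, sq_rpow_three_quarters hp.le]
  have hbound := norm_tsum_int_sub_apply_zero_le (f := f)
    ((summable_one_div_nat_add_one_rpow (s := 3 / 2) (by norm_num)).mul_left (ξ ^ (3 / 2 : ℝ)))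
    (fun n => by
      have h := hterm (n + 1) (by positivity)
      rw [abs_of_pos (by positivity)] at h
      simp only [f]; push_cast; exact h)
    (fun n => by
      have h := hterm (-(n + 1)) (neg_ne_zero.2 (by positivity))
      rw [abs_neg, abs_of_pos (by positivity)] at h
      simp only [f]; push_cast; exact h)
  rw [tsum_mul_left] at hbound
  rw [← hzero, ← Real.norm_eq_abs]
  linarith

theorem le_iSup_abs_of_abs_sub_le {ι : Type*} {u a : ι → ℝ} {B M : ℝ}
    (hu : ∀ i, |u i - a i| ≤ B) (ha : ∀ i, |a i| ≤ M) (i : ι) :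
    |a i| - B ≤ ⨆ j, |u j| := by
  have hbdd : BddAbove (Set.range fun j => |u j|) := by
    refine ⟨M + B, ?_⟩
    rintro _ ⟨j, rfl⟩
    linarith [abs_sub_abs_le_abs_sub (u j) (a j), hu j, ha j]
  refine le_ciSup_of_le hbdd i ?_
  linarith [abs_sub_abs_le_abs_sub (a i) (u i), abs_sub_comm (a i) (u i), hu i]

theorem mul_rpow_three_halves_lt {a b x : ℝ} (ha : 0 < a) (hb : 0 ≤ b) (hx : 0 ≤ x)
    (h : x < (b / a) ^ (2 / 3 : ℝ)) : a * x ^ (3 / 2 : ℝ) < b := by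
  rw [show (2 / 3 : ℝ) = (3 / 2)⁻¹ by norm_num,
    lt_rpow_inv_iff_of_pos hx (div_nonneg hb ha.le) (by norm_num)] at h
  exact (lt_div_iff₀' ha).1 h

theorem sup_phi_positive_lower_bound (c₂ c₁ ζ32 ξ₀ : ℝ)
    (hc₂ : c₂ = ((78 * Real.sqrt 3 + 54 * Real.sqrt 11) ^ ((1 : ℝ) / 3) - Real.sqrt 3) / 9 -
      8 / (3 * (78 * Real.sqrt 3 + 54 * Real.sqrt 11) ^ ((1 : ℝ) / 3)))
    (hc₁ : c₁ = c₂ / Real.sqrt (c₂ ^ 2 + 1))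
    (hζ : ζ32 = ∑' n : ℕ, 1 / ((n : ℝ) + 1) ^ ((3 : ℝ) / 2))
    (hξ₀ : ξ₀ = (c₁ / (2 * ζ32)) ^ ((2 : ℝ) / 3))
    (ξ : ℝ) (hξ : 0 < ξ) (hξlt : ξ < ξ₀)
    (φ : ℕ → ℝ → ℝ)
    (hφ : ∀ p : ℕ, ∀ ℓ : ℝ, φ p ℓ = (1 / (Real.pi * ξ)) *
      ∑' k : ℤ,
        Real.sin (2 * Real.pi * Real.sqrt ℓ *
            Real.sqrt ((k : ℝ) ^ 2 / ξ ^ 2 + (p : ℝ) ^ 2) - Real.pi / 4) /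
          ((k : ℝ) ^ 2 / ξ ^ 2 + (p : ℝ) ^ 2) ^ ((3 : ℝ) / 4))
    (c₀ : ℝ) (hc₀ : c₀ = (c₁ - 2 * ζ32 * ξ ^ ((3 : ℝ) / 2)) / (Real.pi * ξ)) :
    0 < c₀ ∧ ∀ ℓ : ℝ, 1 ≤ ℓ → c₀ ≤ ⨆ p : {p : ℕ // 1 ≤ p}, |φ p ℓ| := by
  have hcubic := cubic_eq_one_of_eq_cbrt_formula hc₂
  have hc₁pos : 0 < c₁ := hc₁ ▸ div_pos
    (pos_of_cubic_eq_one (sq_sqrt (by norm_num)) (sqrt_pos.2 (by norm_num)) hcubic)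
    (sqrt_pos.2 (by positivity))
  have hζpos : 0 < ζ32 := hζ ▸ (summable_one_div_nat_add_one_rpow (by norm_num)).tsum_pos
    (fun n => by positivity) 0 (by norm_num)
  set B := 2 * ζ32 * ξ ^ ((3 : ℝ) / 2)
  have hB : B < c₁ := mul_rpow_three_halves_lt (by positivity) hc₁pos.le hξ.le (hξ₀ ▸ hξlt)
  have hπξ : 0 < π * ξ := by positivity
  refine ⟨hc₀ ▸ div_pos (sub_pos.2 hB) hπξ, fun ℓ _ => ?_⟩
  set F : ℝ → ℝ := fun x => sin (2 * π * √ℓ * x - π / 4)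
  have hφF (p : {p : ℕ // 1 ≤ p}) :
      |φ p ℓ - F p / (p : ℝ) ^ (3 / 2 : ℝ) / (π * ξ)| ≤ B / (π * ξ) := by
    rw [hφ, one_div_mul_eq_div, ← sub_div, abs_div, abs_of_pos hπξ]
    gcongr
    have h := abs_tsum_lattice_sub_zero_term_le hξ (Nat.cast_pos.2 p.2) F fun _ => abs_sin_le_one _
    rwa [← hζ] at h
  have hF_le (p : {p : ℕ // 1 ≤ p}) : |F p / (p : ℝ) ^ (3 / 2 : ℝ) / (π * ξ)| ≤ 1 / (π * ξ) := by
    have hp : (1 : ℝ) ≤ (p : ℝ) ^ (3 / 2 : ℝ) := one_le_rpow (Nat.one_le_cast.2 p.2) (by norm_num)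
    rw [abs_div, abs_div, abs_of_pos hπξ, abs_of_pos (zero_lt_one.trans_le hp)]
    gcongr
    exact div_le_one_of_le₀ ((abs_sin_le_one _).trans hp) (zero_le_one.trans hp)
  obtain ⟨p, hp, hcp⟩ := exists_le_abs_sin_mul_sub_pi_div_four_div_rpow hcubic hc₁ (2 * π * √ℓ)
  calc c₀ ≤ |F p / (p : ℝ) ^ (3 / 2 : ℝ) / (π * ξ)| - B / (π * ξ) := by
        rw [hc₀, abs_div _ (π * ξ), abs_of_pos hπξ, ← sub_div]
        gcongr
    _ ≤ ⨆ p : {p : ℕ // 1 ≤ p}, |φ p ℓ| := le_iSup_abs_of_abs_sub_le hφF hF_le ⟨p, hp⟩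
end
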